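/- Assume condition (6) holds. Then every non-zero element A of 𝔏_Λ is injective as an operator on H_n. -/

import Mathlib

noncomputable section

/-- Auxiliary recursion for the weight function: `W(u, []) = 1` and, reading the word
`w = i_k ⋯ i_1` as the list `[i_k, …, i_1]`,
`W(u, i :: w) = λ_{i, w·u} · W(u, w)`, so that
`W(u, i_k⋯i_1) = λ_{i_1,u} · λ_{i_2, i_1 u} ⋯ λ_{i_k, i_{k-1}⋯i_1 u}`. -/
def Waux {n : ℕ} (lam : Fin n → FreeMonoid (Fin n) → ℝ) (u : FreeMonoid (Fin n)) :
    List (Fin n) → ℝ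
  | [] => 1
  | i :: w => lam i (FreeMonoid.ofList w * u) * Waux lam u w

/-- The weight function `W : F_n^+ × F_n^+ → ℝ` associated to the weights `λ_{i,w}`. -/
def Wfun {n : ℕ} (lam : Fin n → FreeMonoid (Fin n) → ℝ) (u w : FreeMonoid (Fin n)) : ℝ :=
  Waux lam u (FreeMonoid.toList w)

instance {n : ℕ} : DecidableEq (FreeMonoid (Fin n)) := Classical.decEq _

/-- `n`-variable Fock space `H_n = ℓ²(F_n^+)`. -/
abbrev Hn (n : ℕ) : Type := lp (fun _ : FreeMonoid (Fin n) => ℂ) 2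

/-- The standard orthonormal basis vector `ξ_w` of `H_n`. -/
def xi {n : ℕ} (w : FreeMonoid (Fin n)) : Hn n := lp.single 2 w 1

/-- The unital WOT-closed algebra generated by a tuple of bounded operators on `H_n`:
the closure, in the weak operator topology, of the unital subalgebra they generate. -/
def wotAlg {n : ℕ} (T : Fin n → (Hn n →L[ℂ] Hn n)) : Set (Hn n →L[ℂ] Hn n) :=
  (ContinuousLinearMapWOT.ofCLM (σ := RingHom.id ℂ) (E := Hn n) (F := Hn n)) ⁻¹'
    (closure ((ContinuousLinearMapWOT.ofCLM (σ := RingHom.id ℂ) (E := Hn n) (F := Hn n)) ''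
      (Algebra.adjoin ℂ (Set.range T) : Subalgebra ℂ (Hn n →L[ℂ] Hn n))))

/-
Every element `A` of `𝔏_Λ` has the matrix of a weighted left multiplier: its column at `ξ_u` is
supported on the words `w u`, where it equals `(A ξ_e)(w) · W(u,w) / W(e,w)`. Each of these
conditions is a linear relation between two matrix entries, hence WOT-closed, so they pass from
the monomials `T_w` to the WOT-closure. For such an `A` and `ζ ≠ 0` with `A ζ = 0`, pick `v` of
minimal length with `ζ(v) ≠ 0`; then `(A ζ)(w v) = ζ(v) (A ξ_v)(w v)` once `A ξ_e` vanishes at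
all words shorter than `w`, so induction on the length of `w` gives `A ξ_e = 0`, hence `A = 0`.
-/

lemma FreeMonoid.mul_inj_of_length_eq {α : Type*} {a b c d : FreeMonoid α} (h : a * b = c * d)
    (hlen : a.length = c.length) : a = c ∧ b = d :=
  List.append_inj h hlen

namespace WeightedShift

variable {n : ℕ}

section FockSpace

lemma xi_apply_self (v : FreeMonoid (Fin n)) : xi v v = 1 :=
  lp.single_apply_self _ _ _

lemma xi_apply_of_ne {v z : FreeMonoid (Fin n)} (h : z ≠ v) : xi v z = 0 :=
  lp.single_apply_ne _ _ _ h

lemma innerSL_xi (z : FreeMonoid (Fin n)) (f : Hn n) : innerSL ℂ (xi z) f = f z := by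
  simp [xi, lp.inner_single_left, RCLike.inner_apply]

lemma hasSum_apply_xi_apply (A : Hn n →L[ℂ] Hn n) (ζ : Hn n) (z : FreeMonoid (Fin n)) :
    HasSum (fun u => ζ u * A (xi u) z) (A ζ z) := by
  have hsingle : ∀ u, lp.single 2 u (ζ u) = ζ u • xi u := fun u => by
    rw [xi, ← lp.single_smul, smul_eq_mul, mul_one]
  have := (innerSL ℂ (xi z)).hasSum (A.hasSum (lp.hasSum_single ENNReal.ofNat_ne_top ζ))
  simpa [hsingle, innerSL_xi] using this

lemma ext_xi {A B : Hn n →L[ℂ] Hn n} (h : ∀ u, A (xi u) = B (xi u)) : A = B := by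
  ext ζ z
  exact (hasSum_apply_xi_apply A ζ z).unique (by simpa only [h] using hasSum_apply_xi_apply B ζ z)

lemma continuous_apply_xi_apply (u z : FreeMonoid (Fin n)) :
    Continuous fun B : Hn n →WOT[ℂ] Hn n => B (xi u) z := by
  simpa only [innerSL_xi] using
    ContinuousLinearMapWOT.continuous_dual_apply (xi u) (innerSL ℂ (xi z))

end FockSpace

section Weights

variable (lam : Fin n → FreeMonoid (Fin n) → ℝ)

lemma wfun_one (u : FreeMonoid (Fin n)) : Wfun lam u 1 = 1 := rfl

lemma wfun_of_mul (u : FreeMonoid (Fin n)) (i : Fin n) (w : FreeMonoid (Fin n)) :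
    Wfun lam u (FreeMonoid.of i * w) = lam i (w * u) * Wfun lam u w := rfl

variable {lam}

lemma wfun_ne_zero (hlam : ∀ i w, lam i w ≠ 0) (u w : FreeMonoid (Fin n)) : Wfun lam u w ≠ 0 := by
  induction w using FreeMonoid.inductionOn' with
  | one => exact one_ne_zero
  | of_mul i w ih => rw [wfun_of_mul]; exact mul_ne_zero (hlam _ _) ih

lemma ofReal_wfun_ne_zero (hlam : ∀ i w, lam i w ≠ 0) (u w : FreeMonoid (Fin n)) :
    (Wfun lam u w : ℂ) ≠ 0 :=
  Complex.ofReal_ne_zero.mpr (wfun_ne_zero hlam u w)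

end Weights

lemma exists_ne_zero_forall_length_lt {ζ : Hn n} (hζ : ζ ≠ 0) :
    ∃ v, ζ v ≠ 0 ∧ ∀ u : FreeMonoid (Fin n), u.length < v.length → ζ u = 0 := by
  obtain ⟨v, hv⟩ : ∃ v, ζ v ≠ 0 := by
    by_contra! h
    exact hζ (lp.ext (funext h))
  obtain ⟨v, hv, hmin⟩ := (measure FreeMonoid.length).wf.has_min {u | ζ u ≠ 0} ⟨v, hv⟩
  exact ⟨v, hv, fun u hu => not_not.mp fun h => hmin u h hu⟩

structure IsWeightedMultiplier (lam : Fin n → FreeMonoid (Fin n) → ℝ) (A : Hn n →L[ℂ] Hn n) :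
    Prop where
  apply_xi_mul (u w : FreeMonoid (Fin n)) :
    A (xi u) (w * u) * Wfun lam 1 w = A (xi 1) w * Wfun lam u w
  apply_xi_eq_zero (u z : FreeMonoid (Fin n)) : (∀ w, z ≠ w * u) → A (xi u) z = 0

namespace IsWeightedMultiplier

variable {lam : Fin n → FreeMonoid (Fin n) → ℝ} {A : Hn n →L[ℂ] Hn n}

lemma eq_zero_of_apply_xi_one (hA : IsWeightedMultiplier lam A) (hlam : ∀ i w, lam i w ≠ 0)
    (h : A (xi 1) = 0) : A = 0 := by
  refine ext_xi fun u => lp.ext (funext fun z => ?_)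
  by_cases hz : ∃ w, z = w * u
  · obtain ⟨w, rfl⟩ := hz
    have := hA.apply_xi_mul u w
    rw [h, lp.coeFn_zero, Pi.zero_apply, zero_mul, mul_eq_zero] at this
    simpa using this.resolve_right (ofReal_wfun_ne_zero hlam 1 w)
  · simpa using hA.apply_xi_eq_zero u z (not_exists.mp hz)

lemma apply_apply_mul_eq (hA : IsWeightedMultiplier lam A) (hlam : ∀ i w, lam i w ≠ 0)
    {ζ : Hn n} {v w : FreeMonoid (Fin n)} (hv : ∀ u, u.length < v.length → ζ u = 0)
    (hw : ∀ w', w'.length < w.length → A (xi 1) w' = 0) :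
    A ζ (w * v) = ζ v * A (xi v) (w * v) := by
  refine (hasSum_apply_xi_apply A ζ (w * v)).unique (hasSum_single v fun u hu => ?_)
  by_cases hsuffix : ∃ w', w * v = w' * u
  · obtain ⟨w', hw'⟩ := hsuffix
    rcases lt_or_ge u.length v.length with hlt | hge
    · rw [hv u hlt, zero_mul]
    have hlen : w'.length < w.length := by
      have hlengths := congrArg FreeMonoid.length hw'
      rw [FreeMonoid.length_mul, FreeMonoid.length_mul] at hlengths
      refine lt_of_le_of_ne (by omega) fun heq => hu ?_
      exact (FreeMonoid.mul_inj_of_length_eq hw' heq.symm).2.symm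
    have hentry := hA.apply_xi_mul u w'
    rw [← hw', hw w' hlen, zero_mul] at hentry
    rw [(mul_eq_zero.mp hentry).resolve_right (ofReal_wfun_ne_zero hlam 1 w'), mul_zero]
  · rw [hA.apply_xi_eq_zero u _ (not_exists.mp hsuffix), mul_zero]

lemma apply_xi_one_eq_zero (hA : IsWeightedMultiplier lam A) (hlam : ∀ i w, lam i w ≠ 0)
    {ζ : Hn n} (hζ : A ζ = 0) (hζ0 : ζ ≠ 0) : A (xi 1) = 0 := by
  obtain ⟨v, hv, hmin⟩ := exists_ne_zero_forall_length_lt hζ0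
  refine lp.ext (funext fun w => ?_)
  induction w using (measure FreeMonoid.length).wf.induction with
  | h w ih =>
    have hcol : A (xi v) (w * v) = 0 := by
      have := hA.apply_apply_mul_eq hlam hmin ih
      rw [hζ, lp.coeFn_zero, Pi.zero_apply, eq_comm, mul_eq_zero] at this
      exact this.resolve_left hv
    have hentry := hA.apply_xi_mul v w
    rw [hcol, zero_mul, eq_comm] at hentry
    exact (mul_eq_zero.mp hentry).resolve_right (ofReal_wfun_ne_zero hlam v w)

lemma injective (hA : IsWeightedMultiplier lam A) (hlam : ∀ i w, lam i w ≠ 0) (hA0 : A ≠ 0) :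
    Function.Injective A :=
  (injective_iff_map_eq_zero A).2 fun _ hζ => by_contra fun hζ0 =>
    hA0 (hA.eq_zero_of_apply_xi_one hlam (hA.apply_xi_one_eq_zero hlam hζ hζ0))

end IsWeightedMultiplier

section Algebra

variable {lam : Fin n → FreeMonoid (Fin n) → ℝ} {T : Fin n → (Hn n →L[ℂ] Hn n)}

lemma lift_apply_xi (hT : ∀ i w, T i (xi w) = (lam i w : ℂ) • xi (FreeMonoid.of i * w))
    (w u : FreeMonoid (Fin n)) :
    FreeMonoid.lift T w (xi u) = (Wfun lam u w : ℂ) • xi (w * u) := by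
  induction w using FreeMonoid.inductionOn' with
  | one => simp [wfun_one]
  | of_mul i w ih =>
    rw [map_mul, FreeMonoid.lift_eval_of, mul_apply_eq_comp, ih, map_smul, hT,
      smul_smul, wfun_of_mul, Complex.ofReal_mul, mul_comm, mul_assoc]

lemma isWeightedMultiplier_lift
    (hT : ∀ i w, T i (xi w) = (lam i w : ℂ) • xi (FreeMonoid.of i * w)) (w : FreeMonoid (Fin n)) :
    IsWeightedMultiplier lam (FreeMonoid.lift T w) where
  apply_xi_mul u w' := by
    simp only [lift_apply_xi hT, lp.coeFn_smul, Pi.smul_apply, smul_eq_mul, mul_one]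
    by_cases h : w' = w
    · rw [h, xi_apply_self, xi_apply_self]
      ring
    · rw [xi_apply_of_ne h, xi_apply_of_ne (mt mul_right_cancel h)]
      ring
  apply_xi_eq_zero u z hz := by
    simp only [lift_apply_xi hT, lp.coeFn_smul, Pi.smul_apply, xi_apply_of_ne (hz w), smul_zero]

variable (lam) in
def weightedMultipliers : Submodule ℂ (Hn n →L[ℂ] Hn n) where
  carrier := {A | IsWeightedMultiplier lam A}
  add_mem' hA hB :=
    ⟨fun u w => by simp [add_mul, hA.apply_xi_mul, hB.apply_xi_mul],
      fun u z hz => by simp [hA.apply_xi_eq_zero u z hz, hB.apply_xi_eq_zero u z hz]⟩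
  zero_mem' := ⟨fun _ _ => by simp, fun _ _ _ => by simp⟩
  smul_mem' c _ hA :=
    ⟨fun u w => by simp [mul_assoc, hA.apply_xi_mul],
      fun u z hz => by simp [hA.apply_xi_eq_zero u z hz]⟩

lemma adjoin_le_weightedMultipliers
    (hT : ∀ i w, T i (xi w) = (lam i w : ℂ) • xi (FreeMonoid.of i * w)) :
    Subalgebra.toSubmodule (Algebra.adjoin ℂ (Set.range T)) ≤ weightedMultipliers lam := by
  rw [Algebra.adjoin_eq_span, ← FreeMonoid.mrange_lift, Submodule.span_le]
  rintro _ ⟨w, rfl⟩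
  exact isWeightedMultiplier_lift hT w

lemma isClosed_weightedMultipliers (lam : Fin n → FreeMonoid (Fin n) → ℝ) :
    IsClosed {B : Hn n →WOT[ℂ] Hn n | B.toCLM ∈ weightedMultipliers lam} := by
  have hset : {B : Hn n →WOT[ℂ] Hn n | B.toCLM ∈ weightedMultipliers lam} =
      (⋂ (u) (w), {B | B (xi u) (w * u) * (Wfun lam 1 w : ℂ) =
          B (xi 1) w * (Wfun lam u w : ℂ)}) ∩
        ⋂ (u) (z), {B | (∀ w, z ≠ w * u) → B (xi u) z = 0} := by
    ext B
    simp only [Set.mem_inter_iff, Set.mem_iInter, Set.mem_ofPred_eq]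
    exact ⟨fun h => ⟨h.1, h.2⟩, fun h => ⟨h.1, h.2⟩⟩
  rw [hset]
  refine (isClosed_iInter fun u => isClosed_iInter fun w => isClosed_eq ?_ ?_).inter
    (isClosed_iInter fun u => isClosed_iInter fun z =>
      isClosed_imp isOpen_const (isClosed_eq (continuous_apply_xi_apply u z) continuous_const))
  all_goals exact (continuous_apply_xi_apply _ _).mul continuous_const

lemma wotAlg_subset {S : Set (Hn n →L[ℂ] Hn n)}
    (hadj : (Algebra.adjoin ℂ (Set.range T) : Set (Hn n →L[ℂ] Hn n)) ⊆ S)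
    (hS : IsClosed {B : Hn n →WOT[ℂ] Hn n | B.toCLM ∈ S}) : wotAlg T ⊆ S :=
  fun _ hA => (closure_minimal (Set.image_subset_iff.2 hadj) hS :
    _ ⊆ {B : Hn n →WOT[ℂ] Hn n | B.toCLM ∈ S}) hA

lemma isWeightedMultiplier_of_mem_wotAlg
    (hT : ∀ i w, T i (xi w) = (lam i w : ℂ) • xi (FreeMonoid.of i * w)) {A : Hn n →L[ℂ] Hn n}
    (hA : A ∈ wotAlg T) : IsWeightedMultiplier lam A :=
  wotAlg_subset (adjoin_le_weightedMultipliers hT) (isClosed_weightedMultipliers lam) hA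

end Algebra

end WeightedShift

open WeightedShift

theorem LLambda_nonzero_injective_general (n : ℕ)
    (lam : Fin n → FreeMonoid (Fin n) → ℝ)
    (hpos : ∀ i w, 0 < lam i w)
    (T : Fin n → (Hn n →L[ℂ] Hn n))
    (hT : ∀ i w, T i (xi w) = (lam i w : ℂ) • xi (FreeMonoid.of i * w))
    (A : Hn n →L[ℂ] Hn n) (hA : A ∈ wotAlg T) (hA0 : A ≠ 0) :
    Function.Injective A :=
  (isWeightedMultiplier_of_mem_wotAlg hT hA).injective (fun i w => (hpos i w).ne') hA0

/-- Assume condition (6) holds. Then every non-zero element of `𝔏_Λ`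
is injective as an operator on `H_n`. -/
theorem LLambda_nonzero_injective (n : ℕ) (hn : 2 ≤ n)
    (lam : Fin n → FreeMonoid (Fin n) → ℝ)
    (hpos : ∀ i w, 0 < lam i w) (hbdd : ∃ C : ℝ, ∀ i w, lam i w ≤ C)
    (h6 : ∃ C : ℝ, ∀ i w, Wfun lam (FreeMonoid.of i) w * (Wfun lam 1 w)⁻¹ ≤ C)
    (T : Fin n → (Hn n →L[ℂ] Hn n))
    (hT : ∀ i w, T i (xi w) = (lam i w : ℂ) • xi (FreeMonoid.of i * w))
    (A : Hn n →L[ℂ] Hn n) (hA : A ∈ wotAlg T) (hA0 : A ≠ 0) :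
    Function.Injective A :=
  LLambda_nonzero_injective_general n lam hpos T hT A hA hA0
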